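/- arXiv:2009.13024 — 6 statements merged into one kernel-verified Lean document; each statement's English description precedes it below -/
import Mathlib

section
/- Let p be a prime and let a_1, ..., a_{p-1} be integers not divisible by p, and let c be any integer. Then there exist integers x_1, ..., x_{p-1} such that a_1 x_1^{p-1} + ... + a_{p-1} x_{p-1}^{p-1} ≡ c (mod p). -/
open Finset Pointwise

lemma aux_card (p : ℕ) (hp : p.Prime) :
    ∀ n (b : Fin n → ZMod p), (∀ i, b i ≠ 0) →
      min p (n + 1) ≤ ((Finset.univ : Finset (Fin n → Bool)).image
        fun ε => ∑ i, if ε i then b i else 0).card := by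
  intro n
  induction n with
  | zero =>
      intro b hb
      have : ((Finset.univ : Finset (Fin 0 → Bool)).image
          fun ε => ∑ i, if ε i then b i else 0) = {0} := by
        ext x; simp
      rw [this]
      simp [min_le_iff]
  | succ n ih =>
      intro b hb
      set b' : Fin n → ZMod p := fun i => b i.castSucc with hb'
      set S : Finset (ZMod p) := (Finset.univ : Finset (Fin n → Bool)).image
        fun ε => ∑ i, if ε i then b' i else 0 with hS
      have hkey : ((Finset.univ : Finset (Fin (n+1) → Bool)).image
          fun ε => ∑ i, if ε i then b i else 0) = S + ({0, b (Fin.last n)} : Finset (ZMod p)) := by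
        ext x
        simp only [Finset.mem_image, Finset.mem_univ, true_and, Finset.mem_add, hS]
        constructor
        · rintro ⟨ε, rfl⟩
          refine ⟨_, ⟨ε ∘ Fin.castSucc, rfl⟩,
            if ε (Fin.last n) then b (Fin.last n) else 0, ?_, ?_⟩
          · by_cases h : ε (Fin.last n) <;> simp [h]
          · rw [Fin.sum_univ_castSucc]
            rfl
        · rintro ⟨y, ⟨ε', rfl⟩, z, hz, rfl⟩
          refine ⟨Fin.snoc ε' (decide (z = b (Fin.last n))), ?_⟩
          rw [Fin.sum_univ_castSucc]
          congr 1
          · refine Finset.sum_congr rfl fun i _ => ?_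
            simp [Fin.snoc_castSucc, hb']
          · simp only [Fin.snoc_last]
            rcases Finset.mem_insert.mp hz with rfl | hz
            · simp [Ne.symm (hb (Fin.last n))]
            · simp only [Finset.mem_singleton] at hz
              subst hz
              simp
      rw [hkey]
      have hSne : S.Nonempty := ⟨∑ i, if (fun _ => true) i then b' i else 0,
        Finset.mem_image.mpr ⟨fun _ => true, Finset.mem_univ _, rfl⟩⟩
      have htne : ({0, b (Fin.last n)} : Finset (ZMod p)).Nonempty := ⟨0, by simp⟩
      have hcd := ZMod.cauchy_davenport hp hSne htne
      have htcard : ({0, b (Fin.last n)} : Finset (ZMod p)).card = 2 := by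
        rw [Finset.card_insert_of_notMem (by simp [Ne.symm (hb (Fin.last n))])]
        simp
      have hih := ih b' (fun i => hb i.castSucc)
      rw [htcard] at hcd
      have h1 : p ⊓ (n + 1) ≤ S.card := hih
      refine le_trans ?_ hcd
      clear hih hcd hkey hSne htne htcard ih hb hb' hS
      omega

theorem stmt_0 (p : ℕ) (hp : p.Prime) (a : Fin (p - 1) → ℤ)
    (ha : ∀ i, ¬ (p : ℤ) ∣ a i) (c : ℤ) :
    ∃ x : Fin (p - 1) → ℤ,
      (∑ i, a i * x i ^ (p - 1)) ≡ c [ZMOD (p : ℤ)] := by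
  haveI : Fact p.Prime := ⟨hp⟩
  set b : Fin (p - 1) → ZMod p := fun i => ((a i : ℤ) : ZMod p) with hb
  have hbne : ∀ i, b i ≠ 0 := fun i h => ha i ((ZMod.intCast_zmod_eq_zero_iff_dvd _ _).mp h)
  have hcard := aux_card p hp (p - 1) b hbne
  have hp1 : p - 1 + 1 = p := Nat.succ_pred_eq_of_pos hp.pos
  rw [hp1, min_self] at hcard
  have hfull : ((Finset.univ : Finset (Fin (p-1) → Bool)).image
      fun ε => ∑ i, if ε i then b i else 0) = Finset.univ := by
    apply Finset.eq_univ_of_card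
    refine le_antisymm (Finset.card_le_univ _) ?_
    simpa [ZMod.card] using hcard
  have hc : (c : ZMod p) ∈ ((Finset.univ : Finset (Fin (p-1) → Bool)).image
      fun ε => ∑ i, if ε i then b i else 0) := by rw [hfull]; exact Finset.mem_univ _
  obtain ⟨ε, -, hε⟩ := Finset.mem_image.mp hc
  refine ⟨fun i => if ε i then 1 else 0, ?_⟩
  rw [← ZMod.intCast_eq_intCast_iff, ← hε]
  push_cast
  refine Finset.sum_congr rfl fun i _ => ?_
  have hne : p - 1 ≠ 0 := Nat.sub_ne_zero_of_lt hp.one_lt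
  by_cases h : ε i <;> simp [h, hb, hne]
end

section
/- Let p be a prime and let v_i = (a_i, b_i) ∈ 𝔽_p² be nonzero vectors for i = 1, ..., 2p-1. Assume that the vectors v_{p+1}, ..., v_{2p-1} all lie in the same projective class (i.e., each is a nonzero scalar multiple of a common nonzero vector). Then the system a_1 x_1^{p-1} + ... + a_{2p-1} x_{2p-1}^{p-1} ≡ 0 (mod p), b_1 x_1^{p-1} + ... + b_{2p-1} x_{2p-1}^{p-1} ≡ 0 (mod p) has a solution with (x_1, ..., x_p) ≢ (0, ..., 0) (mod p). -/
/-!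
Let `w` span the common line of `v p, …, v (2p-2)`. The functional `x ↦ x.1 * w.2 - x.2 * w.1`
takes equal values on two of the `p + 1` prefix sums of `v 0, …, v (p-1)`, so some block
`v a + ⋯ + v (b-1)` with `a < b ≤ p` equals `t • w`. The tail vectors are `c i • w` with `c i ≠ 0`,
and by Cauchy–Davenport the subset sums of these `p - 1` nonzero residues exhaust `ZMod p`, so one
of them is `-t`. The block together with that subset is a set `U` meeting the first `p` indices with
`∑ i ∈ U, v i = 0`, and the indicator of `U` solves the system because `1 ^ (p - 1) = 1`.
-/

open Finset
open scoped Pointwise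

theorem ZMod.min_le_card_image_powerset_sum {ι : Type*} [DecidableEq ι] {p : ℕ} (hp : p.Prime)
    {s : Finset ι} {c : ι → ZMod p} (hc : ∀ i ∈ s, c i ≠ 0) :
    min p (#s + 1) ≤ #(s.powerset.image fun T => ∑ i ∈ T, c i) := by
  induction s using Finset.induction_on with
  | empty => simp
  | @insert a s ha ih =>
    set A := s.powerset.image fun T => ∑ i ∈ T, c i
    have hA : min p (#s + 1) ≤ #A := ih fun i hi => hc i (mem_insert_of_mem hi)
    have hca : c a ≠ 0 := hc a (mem_insert_self a s)
    have hsub : A + {0, c a} ⊆ (insert a s).powerset.image fun T => ∑ i ∈ T, c i := by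
      intro x hx
      obtain ⟨_, hy, z, hz, rfl⟩ := mem_add.1 hx
      obtain ⟨T, hT, rfl⟩ := mem_image.1 hy
      rw [mem_powerset] at hT
      rcases mem_insert.1 hz with rfl | hz
      · exact mem_image.2 ⟨T, mem_powerset.2 (hT.trans (subset_insert a s)), (add_zero _).symm⟩
      · refine mem_image.2 ⟨insert a T, mem_powerset.2 (insert_subset_insert a hT), ?_⟩
        rw [sum_insert fun h => ha (hT h), mem_singleton.1 hz, add_comm]
    have hCD := ZMod.cauchy_davenport hp (s := A) (t := {0, c a})
      ((powerset_nonempty s).image _) (insert_nonempty 0 {c a})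
    rw [card_pair hca.symm] at hCD
    have := card_le_card hsub
    rw [card_insert_of_notMem ha]
    omega

theorem ZMod.exists_subset_sum_eq {ι : Type*} [DecidableEq ι] {p : ℕ} (hp : p.Prime)
    {s : Finset ι} {c : ι → ZMod p} (hc : ∀ i ∈ s, c i ≠ 0) (hs : p - 1 ≤ #s) (z : ZMod p) :
    ∃ T ⊆ s, ∑ i ∈ T, c i = z := by
  have := Fact.mk hp
  have hcard : #(s.powerset.image fun T => ∑ i ∈ T, c i) = Fintype.card (ZMod p) := by
    have := min_le_card_image_powerset_sum hp hc
    have := card_le_univ (s.powerset.image fun T => ∑ i ∈ T, c i)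
    rw [ZMod.card] at *
    omega
  obtain ⟨T, hT, rfl⟩ := mem_image.1 ((eq_univ_of_card _ hcard).symm ▸ mem_univ z)
  exact ⟨T, mem_powerset.1 hT, rfl⟩

theorem exists_sum_Ico_eq_zero {G : Type*} [AddCommGroup G] [Fintype G] (u : ℕ → G) :
    ∃ a b, a < b ∧ b ≤ Fintype.card G ∧ ∑ k ∈ Ico a b, u k = 0 := by
  obtain ⟨i, hi, j, hj, hij, heq⟩ := exists_ne_map_eq_of_card_lt_of_maps_to
    (s := range (Fintype.card G + 1)) (t := univ) (f := fun n => ∑ k ∈ range n, u k)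
    (by rw [card_range, card_univ]; omega) fun _ _ => mem_coe.2 (mem_univ _)
  rw [mem_range] at hi hj
  rcases hij.lt_or_gt with h | h
  · exact ⟨i, j, h, by omega, by rw [sum_Ico_eq_sub _ h.le, heq, sub_self]⟩
  · exact ⟨j, i, h, by omega, by rw [sum_Ico_eq_sub _ h.le, heq, sub_self]⟩

theorem Prod.exists_eq_smul_of_mul_eq_mul {K : Type*} [Field K] {w x : K × K} (hw : w ≠ 0)
    (h : x.1 * w.2 = x.2 * w.1) : ∃ t : K, x = t • w := by
  rcases ne_or_eq w.1 0 with h1 | h1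
  · refine ⟨x.1 / w.1, Prod.ext (by simp [h1]) ?_⟩
    simp only [Prod.smul_snd, smul_eq_mul]
    field_simp
    linear_combination h.symm
  · have h2 : w.2 ≠ 0 := fun h2 => hw (Prod.ext h1 h2)
    refine ⟨x.2 / w.2, Prod.ext ?_ (by simp [h2])⟩
    simp only [Prod.smul_fst, smul_eq_mul]
    field_simp
    linear_combination h

theorem exists_sum_Ico_eq_smul {K : Type*} [Field K] [Fintype K] (V : ℕ → K × K) {w : K × K}
    (hw : w ≠ 0) : ∃ a b, a < b ∧ b ≤ Fintype.card K ∧ ∃ t : K, ∑ k ∈ Ico a b, V k = t • w := by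
  let f : K × K →ₗ[K] K := w.2 • LinearMap.fst K K K - w.1 • LinearMap.snd K K K
  obtain ⟨a, b, hab, hb, hsum⟩ := exists_sum_Ico_eq_zero fun k => f (V k)
  refine ⟨a, b, hab, hb, Prod.exists_eq_smul_of_mul_eq_mul hw ?_⟩
  rw [← map_sum] at hsum
  simp only [f, LinearMap.sub_apply, LinearMap.smul_apply, LinearMap.fst_apply,
    LinearMap.snd_apply, smul_eq_mul, sub_eq_zero] at hsum
  linear_combination hsum

theorem exists_zero_sum_of_collinear_tail {p : ℕ} (hp : p.Prime) (V : ℕ → ZMod p × ZMod p)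
    {w : ZMod p × ZMod p} (hw : w ≠ 0)
    (htail : ∀ k ∈ Ico p (2 * p - 1), ∃ c : ZMod p, c ≠ 0 ∧ V k = c • w) :
    ∃ U ⊆ range (2 * p - 1), ∑ k ∈ U, V k = 0 ∧ ∃ k ∈ U, k < p := by
  have := Fact.mk hp
  obtain ⟨a, b, hab, hb, t, ht⟩ := exists_sum_Ico_eq_smul V hw
  rw [ZMod.card] at hb
  choose! c hc0 hcV using htail
  obtain ⟨T, hT, hTt⟩ := ZMod.exists_subset_sum_eq hp hc0 (by rw [Nat.card_Ico]; omega) (-t)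
  have hdisj : Disjoint (Ico a b) T := disjoint_left.2 fun k hk hkT => by
    have := mem_Ico.1 (hT hkT)
    have := mem_Ico.1 hk
    omega
  have hU : Ico a b ∪ T ⊆ range (2 * p - 1) := by
    rw [range_eq_Ico]
    exact union_subset (Ico_subset_Ico (Nat.zero_le a) (by omega))
      (hT.trans (Ico_subset_Ico_left (Nat.zero_le p)))
  refine ⟨Ico a b ∪ T, hU, ?_, a, mem_union_left _ (left_mem_Ico.2 hab), by omega⟩
  calc ∑ k ∈ Ico a b ∪ T, V k = t • w + (∑ k ∈ T, c k) • w := by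
        rw [sum_union hdisj, ht, sum_smul, sum_congr rfl fun k hk => hcV k (hT hk)]
    _ = 0 := by rw [hTt, ← add_smul, add_neg_cancel, zero_smul]

theorem Fin.sum_univ_ite_val_mem {M : Type*} [AddCommMonoid M] {n : ℕ} {U : Finset ℕ}
    (hU : U ⊆ range n) (f : ℕ → M) :
    ∑ i : Fin n, (if (i : ℕ) ∈ U then f i else 0) = ∑ k ∈ U, f k := by
  rw [Fin.sum_univ_eq_sum_range (fun k => if k ∈ U then f k else 0), sum_ite_mem,
    inter_eq_right.2 hU]

theorem stmt_2_general (p : ℕ) (hp : p.Prime) (v : Fin (2 * p - 1) → ZMod p × ZMod p)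
    (hclass : ∃ w : ZMod p × ZMod p, w ≠ 0 ∧
      ∀ i : Fin (2 * p - 1), p ≤ (i : ℕ) → ∃ c : ZMod p, c ≠ 0 ∧ v i = c • w) :
    ∃ x : Fin (2 * p - 1) → ZMod p,
      (∑ i, (v i).1 * x i ^ (p - 1)) = 0 ∧
      (∑ i, (v i).2 * x i ^ (p - 1)) = 0 ∧
      ∃ i : Fin (2 * p - 1), (i : ℕ) < p ∧ x i ≠ 0 := by
  have := Fact.mk hp
  obtain ⟨w, hw, hcl⟩ := hclass
  -- extended by zero, so that blocks of consecutive indices are intervals `Ico a b`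
  let V : ℕ → ZMod p × ZMod p := fun k => if h : k < 2 * p - 1 then v ⟨k, h⟩ else 0
  obtain ⟨U, hU, hUsum, k, hkU, hkp⟩ := exists_zero_sum_of_collinear_tail hp V hw fun k hk => by
    simpa [V, (mem_Ico.1 hk).2] using hcl ⟨k, (mem_Ico.1 hk).2⟩ (mem_Ico.1 hk).1
  have hterm (g : ZMod p × ZMod p → ZMod p) (i : Fin (2 * p - 1)) :
      g (v i) * (if (i : ℕ) ∈ U then 1 else 0) ^ (p - 1) =
        if (i : ℕ) ∈ U then g (V i) else 0 := by
    split_ifs <;> simp [V, zero_pow (Nat.sub_ne_zero_of_lt hp.one_lt)]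
  refine ⟨fun i => if (i : ℕ) ∈ U then 1 else 0, ?_, ?_,
    ⟨k, mem_range.1 (hU hkU)⟩, hkp, by simp [hkU]⟩
  · rw [sum_congr rfl fun i _ => hterm Prod.fst i, Fin.sum_univ_ite_val_mem hU fun k => (V k).1,
      ← Prod.fst_sum, hUsum, Prod.fst_zero]
  · rw [sum_congr rfl fun i _ => hterm Prod.snd i, Fin.sum_univ_ite_val_mem hU fun k => (V k).2,
      ← Prod.snd_sum, hUsum, Prod.snd_zero]

theorem stmt_2 (p : ℕ) (hp : p.Prime) (v : Fin (2 * p - 1) → ZMod p × ZMod p)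
    (hv : ∀ i, v i ≠ 0)
    (hclass : ∃ w : ZMod p × ZMod p, w ≠ 0 ∧
      ∀ i : Fin (2 * p - 1), p ≤ (i : ℕ) → ∃ c : ZMod p, c ≠ 0 ∧ v i = c • w) :
    ∃ x : Fin (2 * p - 1) → ZMod p,
      (∑ i, (v i).1 * x i ^ (p - 1)) = 0 ∧
      (∑ i, (v i).2 * x i ^ (p - 1)) = 0 ∧
      ∃ i : Fin (2 * p - 1), (i : ℕ) < p ∧ x i ≠ 0 :=
  stmt_2_general p hp v hclass
end

section
/- Let p be a prime, n ≥ 1, and let v_1, ..., v_{3n} ∈ 𝔽_p² be nonzero vectors with the second coordinates of v_1, ..., v_n all nonzero. Assume that no n+1 of the vectors v_1, ..., v_{3n} lie in the same projective class. Then there exist indices i_1 < ... < i_n in {n+1, ..., 3n} such that the sum over all functions I: {1,...,2n} → {1,2} with exactly n values equal to 1 of the product ∏_{i=1}^n v_i(I(i)) · ∏_{j=1}^n v_{i_j}(I(n+j)) is nonzero in 𝔽_p. -/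
/-!
Write `Q = ∏_{i ≤ n} (v_i(1) X + v_i(2))`; the displayed sum is the coefficient of `X^n` in
`Q · ∏_j (v_{i_j}(1) X + v_{i_j}(2))`. The key fact is that, for `2n` nonzero vectors with at most
`n` in each projective class, the products of `n` of their linear forms span all polynomials of
degree `≤ n`. Granting this, `P ↦ [X^n] (Q · P)` vanishes on every such product only if it
vanishes on `X^(n - deg Q)`, which it does not, as it maps that to the leading coefficient of `Q`.
The spanning fact is proved by induction on `n`: remove two vectors `u, w` from different classes,
chosen so that every class keeps at most `n - 1` elements; since `u` and `w` are independent,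
every polynomial of degree `≤ n` is `ℓ_u A + ℓ_w A'` with `A, A'` of degree `≤ n - 1`, where
`ℓ_u`, `ℓ_w` are the linear forms of `u`, `w`.
-/

open Polynomial Finset

section Expansion

variable {R : Type*} [CommSemiring R]

/-- The linear form `w.1 x + w.2 y`, dehomogenised at `y = 1`. -/
noncomputable def linForm (w : R × R) : R[X] := C w.1 * X + C w.2

lemma linForm_ne_zero {w : R × R} (hw : w ≠ 0) : linForm w ≠ 0 := by
  intro h
  have h1 := congrArg (coeff · 1) h
  have h0 := congrArg (coeff · 0) h
  simp only [linForm, coeff_add, coeff_C_mul_X, coeff_C, if_true, coeff_zero] at h1 h0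
  exact hw (Prod.ext (by simpa using h1) (by simpa using h0))

lemma natDegree_linForm_le (w : R × R) : (linForm w).natDegree ≤ 1 := by
  unfold linForm
  compute_degree

variable {ι : Type*} [Fintype ι] [DecidableEq ι]

lemma prod_linForm_eq_sum (f : ι → R × R) :
    ∏ i, linForm (f i) = ∑ I : ι → Fin 2,
      C (∏ i, if I i = 0 then (f i).1 else (f i).2) * X ^ #{i | I i = 0} := by
  have hsplit : ∀ w : R × R, linForm w
      = ∑ j : Fin 2, C (if j = 0 then w.1 else w.2) * X ^ (if j = 0 then 1 else 0) := by
    intro w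
    simp [linForm, Fin.sum_univ_two]
  simp only [hsplit, Fintype.prod_sum, prod_mul_distrib, ← map_prod, prod_pow_eq_pow_sum,
    sum_boole, Nat.cast_id]

variable {κ : Type*} [Fintype κ] [DecidableEq κ]

lemma coeff_prod_linForm_mul_prod_linForm (a : ι → R × R) (b : κ → R × R) (k : ℕ) :
    ((∏ i, linForm (a i)) * ∏ j, linForm (b j)).coeff k =
      ∑ IJ ∈ univ.filter (fun IJ : (ι → Fin 2) × (κ → Fin 2) =>
          #{i | IJ.1 i = 0} + #{j | IJ.2 j = 0} = k),
        (∏ i, if IJ.1 i = 0 then (a i).1 else (a i).2) *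
        (∏ j, if IJ.2 j = 0 then (b j).1 else (b j).2) := by
  rw [prod_linForm_eq_sum, prod_linForm_eq_sum, sum_mul_sum, ← Fintype.sum_prod_type',
    finsetSum_coeff, sum_filter]
  refine sum_congr rfl fun IJ _ => ?_
  rw [mul_mul_mul_comm, ← C_mul, ← pow_add, coeff_C_mul_X_pow]
  exact if_congr eq_comm rfl rfl

end Expansion

section Fibers

variable {ι β : Type*} [DecidableEq ι] [DecidableEq β] {κ : ι → β} {B : Finset ι} {n : ℕ}

/-- Take `u` with a largest fibre, and `w` with a largest fibre outside that of `u`: a third fibre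
of size `n + 1` would give `3 (n + 1) > #B` elements. -/
lemma exists_pair_covering_large_fibers (hB : #B = 2 * (n + 1))
    (hκ : ∀ b, #{j ∈ B | κ j = b} ≤ n + 1) :
    ∃ u ∈ B, ∃ w ∈ B, κ u ≠ κ w ∧ ∀ b, b ≠ κ u → b ≠ κ w → #{j ∈ B | κ j = b} ≤ n := by
  obtain ⟨u, hu, humax⟩ := B.exists_max_image (fun i => #{j ∈ B | κ j = κ i})
    (card_pos.1 (by omega))
  set B₁ := {j ∈ B | ¬κ j = κ u}
  have hsplit : #{j ∈ B | κ j = κ u} + #B₁ = #B := card_filter_add_card_filter_not _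
  obtain ⟨w, hw, hwmax⟩ := B₁.exists_max_image (fun i => #{j ∈ B | κ j = κ i})
    (card_pos.1 (by have := hκ (κ u); omega))
  rw [mem_filter] at hw
  refine ⟨u, hu, w, hw.1, Ne.symm hw.2, fun b hbu hbw => ?_⟩
  by_contra! hbig
  obtain ⟨i, hi⟩ : {j ∈ B | κ j = b}.Nonempty := card_pos.1 (by omega)
  obtain ⟨hiB, rfl⟩ := mem_filter.1 hi
  have hwi : #{j ∈ B | κ j = κ w} + #{j ∈ B | κ j = κ i} ≤ #B₁ := by
    rw [← card_union_of_disjoint (disjoint_filter.2 fun j _ (hjw : κ j = κ w)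
      (hji : κ j = κ i) => hbw (hji.symm.trans hjw))]
    refine card_le_card fun j => ?_
    simp only [mem_union, mem_filter, B₁]
    rintro (⟨hj, hjw⟩ | ⟨hj, hji⟩)
    · exact ⟨hj, hjw ▸ hw.2⟩
    · exact ⟨hj, hji ▸ hbu⟩
  have := hwmax i (mem_filter.2 ⟨hiB, hbu⟩)
  have := humax i hiB
  omega

lemma card_fiber_erase_erase_le {u w : ι} (hu : u ∈ B) (hw : w ∈ B) (huw : κ u ≠ κ w)
    (hκ : ∀ b, #{j ∈ B | κ j = b} ≤ n + 1)
    (hlarge : ∀ b, b ≠ κ u → b ≠ κ w → #{j ∈ B | κ j = b} ≤ n) (b : β) :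
    #{j ∈ (B.erase u).erase w | κ j = b} ≤ n := by
  have hsub : {j ∈ B.erase u | κ j = b} ⊆ {j ∈ B | κ j = b} :=
    filter_subset_filter _ (erase_subset _ _)
  have hsub' : {j ∈ (B.erase u).erase w | κ j = b} ⊆ {j ∈ B.erase u | κ j = b} :=
    filter_subset_filter _ (erase_subset _ _)
  have := hκ b
  by_cases hbu : b = κ u
  · have := card_le_card hsub'
    rw [filter_erase (p := fun j => κ j = b) (s := B),
      card_erase_of_mem (mem_filter.2 ⟨hu, hbu.symm⟩)] at this
    omega
  by_cases hbw : b = κ w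
  · have := card_le_card hsub
    have hwu : w ∈ B.erase u := mem_erase.2 ⟨fun h => huw (congrArg κ h).symm, hw⟩
    rw [filter_erase, card_erase_of_mem (mem_filter.2 ⟨hwu, hbw.symm⟩)]
    omega
  exact (card_le_card (hsub'.trans hsub)).trans (hlarge b hbu hbw)

end Fibers

section Field

variable {F : Type*} [Field F]

lemma mem_orbit_units_of_det_eq_zero {x y : F × F} (hx : x ≠ 0) (hy : y ≠ 0)
    (h : x.1 * y.2 - x.2 * y.1 = 0) : x ∈ MulAction.orbit Fˣ y := by
  obtain ⟨c, rfl⟩ : ∃ c : F, c • y = x := by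
    by_cases hy1 : y.1 = 0
    · have hy2 : y.2 ≠ 0 := fun hy2 => hy (Prod.ext hy1 hy2)
      have hx1 : x.1 = 0 := by simpa [hy1, hy2] using h
      refine ⟨x.2 / y.2, Prod.ext ?_ ?_⟩ <;> simp [hy1, hy2, hx1]
    · refine ⟨x.1 / y.1, Prod.ext ?_ ?_⟩
      · simp [hy1]
      · simp only [Prod.smul_snd, smul_eq_mul]
        field_simp
        linear_combination h
  have hc : c ≠ 0 := by rintro rfl; simp at hx
  exact ⟨Units.mk0 c hc, rfl⟩

lemma exists_eq_linForm_mul_add_linForm_mul {u w : F × F} (hdet : u.1 * w.2 - u.2 * w.1 ≠ 0)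
    {P : F[X]} {n : ℕ} (hP : P.natDegree ≤ n + 1) :
    ∃ A A' : F[X], A.natDegree ≤ n ∧ A'.natDegree ≤ n ∧ linForm u * A + linForm w * A' = P := by
  have hdivX : P.divX.natDegree ≤ n := by rw [natDegree_divX_eq_natDegree_tsub_one]; omega
  set d := u.1 * w.2 - u.2 * w.1
  -- `P = divX P * X + P(0)`, and Cramer's rule writes `X` and `1` via `linForm u`, `linForm w`.
  refine ⟨C d⁻¹ * (C w.2 * P.divX - C (P.coeff 0 * w.1)),
    C d⁻¹ * (C (P.coeff 0 * u.1) - C u.2 * P.divX), ?_, ?_, ?_⟩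
  · have hC : (C (P.coeff 0 * w.1)).natDegree ≤ n := (natDegree_C _).trans_le n.zero_le
    exact (natDegree_C_mul_le _ _).trans ((natDegree_sub_le _ _).trans
      (max_le ((natDegree_C_mul_le _ _).trans hdivX) hC))
  · have hC : (C (P.coeff 0 * u.1)).natDegree ≤ n := (natDegree_C _).trans_le n.zero_le
    exact (natDegree_C_mul_le _ _).trans ((natDegree_sub_le _ _).trans
      (max_le hC ((natDegree_C_mul_le _ _).trans hdivX)))
  · have hd : C d⁻¹ * (C u.1 * C w.2 - C u.2 * C w.1) = 1 := by
      rw [← C_mul, ← C_mul, ← C_sub, ← C_mul, inv_mul_cancel₀ hdet, C_1]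
    unfold linForm
    rw [C_mul, C_mul]
    linear_combination (P.divX * X + C (P.coeff 0)) * hd + divX_mul_X_add P

variable {ι : Type*} [DecidableEq ι] (f : ι → F × F)

noncomputable def prodSpan (B : Finset ι) (n : ℕ) : Submodule F F[X] :=
  Submodule.span F ((fun T => ∏ i ∈ T, linForm (f i)) '' (B.powersetCard n : Set (Finset ι)))

variable {f}

lemma linForm_mul_mem_prodSpan {B D : Finset ι} {u : ι} {n : ℕ} (hu : u ∈ B) (hD : D ⊆ B.erase u)
    {P : F[X]} (hP : P ∈ prodSpan f D n) : linForm (f u) * P ∈ prodSpan f B (n + 1) := by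
  have hmap : (prodSpan f D n).map (LinearMap.mulLeft F (linForm (f u))) ≤
      prodSpan f B (n + 1) := by
    rw [prodSpan, Submodule.map_span, ← Set.image_comp]
    refine Submodule.span_mono ?_
    rintro _ ⟨T, hT, rfl⟩
    rw [mem_coe, mem_powersetCard] at hT
    have huT : u ∉ T := fun h => (mem_erase.1 (hD (hT.1 h))).1 rfl
    refine ⟨insert u T, ?_, by simp [prod_insert huT]⟩
    rw [mem_coe, mem_powersetCard, card_insert_of_notMem huT, hT.2]
    exact ⟨insert_subset hu (hT.1.trans (hD.trans (erase_subset _ _))), rfl⟩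
  exact hmap (Submodule.mem_map_of_mem hP)

/-- Projective classes are encoded as orbits of `Fˣ`. -/
theorem mem_prodSpan_of_natDegree_le {n : ℕ} {B : Finset ι} (hB : #B = 2 * n)
    (hf : ∀ i ∈ B, f i ≠ 0) (hcls : ∀ b, #{j ∈ B | MulAction.orbit Fˣ (f j) = b} ≤ n)
    {P : F[X]} (hP : P.natDegree ≤ n) : P ∈ prodSpan f B n := by
  induction n generalizing B P with
  | zero =>
    rw [eq_C_of_natDegree_eq_zero (Nat.le_zero.1 hP), ← mul_one (C _), ← smul_eq_C_mul]
    exact Submodule.smul_mem _ _ (Submodule.subset_span ⟨∅, by simp, by simp⟩)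
  | succ n ih =>
    obtain ⟨u, hu, w, hw, huw, hlarge⟩ := exists_pair_covering_large_fibers hB hcls
    have hwu : w ∈ B.erase u := mem_erase.2 ⟨fun h => huw (by rw [h]), hw⟩
    have hdet : (f u).1 * (f w).2 - (f u).2 * (f w).1 ≠ 0 := fun h =>
      huw (MulAction.orbit_eq_iff.2 (mem_orbit_units_of_det_eq_zero (hf u hu) (hf w hw) h))
    have ihD {Q : F[X]} (hQ : Q.natDegree ≤ n) : Q ∈ prodSpan f ((B.erase u).erase w) n :=
      ih (by rw [card_erase_of_mem hwu, card_erase_of_mem hu, hB]; omega)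
        (fun i hi => hf i (mem_of_mem_erase (mem_of_mem_erase hi)))
        (card_fiber_erase_erase_le hu hw huw hcls hlarge) hQ
    obtain ⟨A, A', hA, hA', rfl⟩ := exists_eq_linForm_mul_add_linForm_mul hdet hP
    refine add_mem (linForm_mul_mem_prodSpan hu (erase_subset _ _) (ihD hA))
      (linForm_mul_mem_prodSpan hw ?_ (ihD hA'))
    rw [erase_right_comm]
    exact erase_subset _ _

theorem exists_coeff_mul_prod_linForm_ne_zero {Q : F[X]} {n : ℕ} (hQ : Q ≠ 0)
    (hdeg : Q.natDegree ≤ n) {B : Finset ι} (hB : #B = 2 * n) (hf : ∀ i ∈ B, f i ≠ 0)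
    (hcls : ∀ b, #{j ∈ B | MulAction.orbit Fˣ (f j) = b} ≤ n) :
    ∃ T ⊆ B, #T = n ∧ (Q * ∏ i ∈ T, linForm (f i)).coeff n ≠ 0 := by
  by_contra! h
  have hker : prodSpan f B n ≤ LinearMap.ker ((lcoeff F n).comp (LinearMap.mulLeft F Q)) := by
    refine Submodule.span_le.2 ?_
    rintro _ ⟨T, hT, rfl⟩
    rw [mem_coe, mem_powersetCard] at hT
    exact h T hT.1 hT.2
  have hX := hker (mem_prodSpan_of_natDegree_le hB hf hcls
    ((natDegree_X_pow_le (n - Q.natDegree)).trans (n.sub_le _)))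
  have hlead := coeff_mul_X_pow Q (n - Q.natDegree) Q.natDegree
  rw [Nat.add_sub_cancel' hdeg] at hlead
  simp only [LinearMap.mem_ker, LinearMap.comp_apply, LinearMap.mulLeft_apply, lcoeff_apply,
    hlead, coeff_natDegree, leadingCoeff_eq_zero] at hX
  exact hQ hX

end Field

theorem stmt_5 (p : ℕ) (hp : p.Prime) (n : ℕ) (hn : 1 ≤ n)
    (v : Fin (3 * n) → ZMod p × ZMod p)
    (hv : ∀ i, v i ≠ 0)
    (hclass : ¬ ∃ (S : Finset (Fin (3 * n))) (w : ZMod p × ZMod p),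
      S.card = n + 1 ∧ w ≠ 0 ∧ ∀ i ∈ S, ∃ c : ZMod p, c ≠ 0 ∧ v i = c • w) :
    ∃ g : Fin n → Fin (3 * n), StrictMono g ∧ (∀ j, n ≤ ((g j : ℕ))) ∧
      (∑ IJ ∈ Finset.univ.filter
          (fun IJ : (Fin n → Fin 2) × (Fin n → Fin 2) =>
            (Finset.univ.filter fun i => IJ.1 i = 0).card +
            (Finset.univ.filter fun j => IJ.2 j = 0).card = n),
        (∏ i : Fin n,
            (if IJ.1 i = 0 then (v ⟨(i : ℕ), by omega⟩).1 else (v ⟨(i : ℕ), by omega⟩).2)) *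
        (∏ j : Fin n,
            (if IJ.2 j = 0 then (v (g j)).1 else (v (g j)).2))) ≠ 0 := by
  have : Fact p.Prime := ⟨hp⟩
  set a : Fin n → ZMod p × ZMod p := fun i => v ⟨i, by omega⟩
  set B : Finset (Fin (3 * n)) := Ici ⟨n, by omega⟩
  have hB : #B = 2 * n := by simp only [B, Fin.card_Ici]; omega
  have hcls (b) : #{j ∈ B | MulAction.orbit (ZMod p)ˣ (v j) = b} ≤ n := by
    by_contra! hbig
    obtain ⟨S, hSB, hS⟩ := exists_subset_card_eq hbig
    obtain ⟨i, hi⟩ : S.Nonempty := card_pos.1 (by omega)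
    refine hclass ⟨S, v i, hS, hv i, fun j hj => ?_⟩
    obtain ⟨c, hc⟩ := MulAction.orbit_eq_iff.1
      ((mem_filter.1 (hSB hj)).2.trans (mem_filter.1 (hSB hi)).2.symm)
    exact ⟨c, c.ne_zero, hc.symm⟩
  have hdeg : (∏ i, linForm (a i)).natDegree ≤ n :=
    (natDegree_prod_le _ _).trans
      ((sum_le_sum fun i _ => natDegree_linForm_le (a i)).trans (by simp))
  obtain ⟨T, hTB, hT, hcoeff⟩ := exists_coeff_mul_prod_linForm_ne_zero
    (prod_ne_zero_iff.2 fun i _ => linForm_ne_zero (hv _)) hdeg hB (fun i _ => hv i) hcls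
  refine ⟨T.orderEmbOfFin hT, (T.orderEmbOfFin hT).strictMono,
    fun j => Fin.le_iff_val_le_val.1 (mem_Ici.1 (hTB (T.orderEmbOfFin_mem hT j))), ?_⟩
  rwa [← T.map_orderEmbOfFin_univ hT, prod_map, coeff_prod_linForm_mul_prod_linForm] at hcoeff
end

section
/- Let p be a prime and let v_1, ..., v_{3p-2} be elements of (ℤ/pℤ)². Then there exist distinct indices i_1, ..., i_t with 1 ≤ t ≤ p such that v_{i_1} + ... + v_{i_t} = 0. -/
open MvPolynomial Finset

lemma key_lemma (p : ℕ) (hp : p.Prime) {ι κ : Type*} [Fintype ι] [Fintype κ]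
    [DecidableEq ι]
    (hcard : Fintype.card κ * (p - 1) < Fintype.card ι) (a : ι → κ → ZMod p) :
    ∃ S : Finset ι, S.Nonempty ∧ ∀ c, ∑ i ∈ S, a i c = 0 := by
  haveI : Fact p.Prime := ⟨hp⟩
  have hp1 : 1 ≤ p - 1 := Nat.le_sub_one_of_lt hp.one_lt
  set F : κ → MvPolynomial ι (ZMod p) := fun c => ∑ i, C (a i c) * X i ^ (p - 1) with hF
  have hdeg : ∀ c, (F c).totalDegree ≤ p - 1 := by
    intro c
    refine (totalDegree_finset_sum _ _).trans ?_
    refine Finset.sup_le fun i _ => ?_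
    calc (C (a i c) * X i ^ (p - 1)).totalDegree
        ≤ (C (a i c)).totalDegree + (X i ^ (p-1) : MvPolynomial ι (ZMod p)).totalDegree :=
          totalDegree_mul _ _
      _ ≤ 0 + (p - 1) := by
          gcongr
          · exact le_of_eq (totalDegree_C _)
          · exact (totalDegree_pow _ _).trans (by simp)
      _ = p - 1 := by omega
  have hsum : (∑ c, (F c).totalDegree) < Fintype.card ι := by
    calc (∑ c, (F c).totalDegree) ≤ ∑ _c : κ, (p - 1) := Finset.sum_le_sum fun c _ => hdeg c
      _ = Fintype.card κ * (p - 1) := by simp [mul_comm]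
      _ < Fintype.card ι := hcard
  have hdvd := char_dvd_card_solutions_of_fintype_sum_lt p hsum
  have heval : ∀ (x : ι → ZMod p) c,
      eval x (F c) = ∑ i ∈ Finset.univ.filter (fun i => x i ≠ 0), a i c := by
    intro x c
    rw [hF]
    simp only [eval_sum, eval_mul, eval_C, eval_pow, eval_X]
    rw [← Finset.sum_filter_add_sum_filter_not Finset.univ (fun i => x i ≠ 0)]
    have h1 : ∑ i ∈ Finset.univ.filter (fun i => x i ≠ 0), a i c * x i ^ (p - 1)
        = ∑ i ∈ Finset.univ.filter (fun i => x i ≠ 0), a i c := by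
      refine Finset.sum_congr rfl fun i hi => ?_
      rw [ZMod.pow_card_sub_one_eq_one (Finset.mem_filter.mp hi).2, mul_one]
    have h2 : ∑ i ∈ Finset.univ.filter (fun i => ¬ x i ≠ 0), a i c * x i ^ (p - 1) = 0 := by
      refine Finset.sum_eq_zero fun i hi => ?_
      have : x i = 0 := by simpa using (Finset.mem_filter.mp hi).2
      rw [this, zero_pow (by omega), mul_zero]
    rw [h1, h2, add_zero]
  have h0 : (fun _ : ι => (0 : ZMod p)) ∈ {x : ι → ZMod p | ∀ c, eval x (F c) = 0} := by
    intro c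
    rw [heval]
    simp
  -- there must be a nonzero solution
  have hcard2 : 1 < Fintype.card { x : ι → ZMod p // ∀ c, eval x (F c) = 0 } := by
    have hpos : 0 < Fintype.card { x : ι → ZMod p // ∀ c, eval x (F c) = 0 } :=
      Fintype.card_pos_iff.mpr ⟨⟨_, h0⟩⟩
    rcases hdvd with ⟨k, hk⟩
    have : k ≠ 0 := by rintro rfl; simp [hk] at hpos
    calc 1 < p := hp.one_lt
      _ ≤ p * k := Nat.le_mul_of_pos_right _ (Nat.pos_of_ne_zero this)
      _ = _ := hk.symm
  obtain ⟨⟨x, hx⟩, ⟨y, hy⟩, hxy⟩ := Fintype.exists_pair_of_one_lt_card hcard2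
  have hor : x ≠ (fun _ => 0) ∨ y ≠ (fun _ => 0) := by
    by_contra h
    push_neg at h
    exact hxy (by simp [Subtype.ext_iff, h.1, h.2])
  wlog hxne : x ≠ (fun _ => 0) generalizing x y
  · exact this y hy x hx (Ne.symm hxy) hor.symm (hor.resolve_left hxne)
  refine ⟨Finset.univ.filter (fun i => x i ≠ 0), ?_, fun c => ?_⟩
  · rw [Finset.filter_nonempty_iff]
    obtain ⟨i, hi⟩ := Function.ne_iff.mp hxne
    exact ⟨i, Finset.mem_univ i, hi⟩
  · rw [← heval x c]; exact hx c

theorem stmt_6 (p : ℕ) (hp : p.Prime) (v : Fin (3 * p - 2) → ZMod p × ZMod p) :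
    ∃ S : Finset (Fin (3 * p - 2)), S.Nonempty ∧ S.card ≤ p ∧ ∑ i ∈ S, v i = 0 := by
  have hp2 : 2 ≤ p := hp.two_le
  have hzero : ∀ (S : Finset (Fin (3 * p - 2))),
      (∑ i ∈ S, (v i).1 = 0) → (∑ i ∈ S, (v i).2 = 0) → ∑ i ∈ S, v i = 0 := by
    intro S h1 h2
    rw [Prod.ext_iff]
    constructor
    · rw [Prod.fst_sum]; simpa using h1
    · rw [Prod.snd_sum]; simpa using h2
  obtain ⟨S₀, hS₀ne, hS₀⟩ := key_lemma p hp (κ := Fin 3)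
    (by simp [Fintype.card_fin]; omega)
    (fun i => ![(v i).1, (v i).2, 1])
  have hc0 : ∑ i ∈ S₀, (v i).1 = 0 := by simpa using hS₀ 0
  have hc1 : ∑ i ∈ S₀, (v i).2 = 0 := by simpa using hS₀ 1
  have hc2 : ((S₀.card : ZMod p)) = 0 := by
    have := hS₀ 2
    simpa using this
  have hdvd : p ∣ S₀.card := (ZMod.natCast_eq_zero_iff _ _).mp hc2
  by_cases hle : S₀.card ≤ p
  · exact ⟨S₀, hS₀ne, hle, hzero S₀ hc0 hc1⟩
  -- S₀.card = 2p
  have hScard : S₀.card = 2 * p := by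
    have hub : S₀.card ≤ 3 * p - 2 := (Finset.card_le_card (Finset.subset_univ _)).trans
      (by simp)
    obtain ⟨k, hk⟩ := hdvd
    have hklt : k ≤ 2 := by
      by_contra h
      push_neg at h
      have : p * 3 ≤ p * k := Nat.mul_le_mul_left p h
      omega
    interval_cases k <;> omega
  obtain ⟨i₀, hi₀⟩ := hS₀ne
  set S' : Finset (Fin (3 * p - 2)) := S₀.erase i₀ with hS'
  have hS'card : S'.card = 2 * p - 1 := by
    rw [hS', Finset.card_erase_of_mem hi₀, hScard]
  obtain ⟨T', hT'ne, hT'⟩ := key_lemma p hp (ι := {i // i ∈ S'}) (κ := Fin 2)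
    (by rw [Fintype.card_fin, Fintype.card_coe, hS'card]; omega)
    (fun j => ![(v j.1).1, (v j.1).2])
  set T : Finset (Fin (3 * p - 2)) := T'.map (Function.Embedding.subtype _) with hT
  have hTsub : T ⊆ S' := by
    intro x hx
    rw [hT, Finset.mem_map] at hx
    obtain ⟨⟨y, hy⟩, _, rfl⟩ := hx
    exact hy
  have hTcard : T.card = T'.card := Finset.card_map _
  have hTsum1 : ∑ i ∈ T, (v i).1 = 0 := by
    rw [hT, Finset.sum_map]
    simpa using hT' 0
  have hTsum2 : ∑ i ∈ T, (v i).2 = 0 := by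
    rw [hT, Finset.sum_map]
    simpa using hT' 1
  have hTne : T.Nonempty := by
    obtain ⟨j, hj⟩ := hT'ne
    exact ⟨j.1, Finset.mem_map.mpr ⟨j, hj, rfl⟩⟩
  by_cases hTle : T.card ≤ p
  · exact ⟨T, hTne, hTle, hzero T hTsum1 hTsum2⟩
  -- take complement in S₀
  have hTsubS₀ : T ⊆ S₀ := hTsub.trans (Finset.erase_subset _ _)
  refine ⟨S₀ \ T, ?_, ?_, ?_⟩
  · rw [← Finset.card_pos, Finset.card_sdiff_of_subset hTsubS₀, hScard]
    have : T.card ≤ S'.card := Finset.card_le_card hTsub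
    omega
  · rw [Finset.card_sdiff_of_subset hTsubS₀, hScard]
    omega
  · refine hzero _ ?_ ?_
    · have h := Finset.sum_sdiff (f := fun i => (v i).1) hTsubS₀
      rw [hc0, hTsum1, add_zero] at h
      exact h
    · have h := Finset.sum_sdiff (f := fun i => (v i).2) hTsubS₀
      rw [hc1, hTsum2, add_zero] at h
      exact h
end

section
/- Let p be a prime and let v_1, ..., v_{3p-2} ∈ ℤ_p² be primitive vectors all lying in the same projective class modulo p. Then there exist distinct indices i_1, ..., i_t with 1 ≤ t ≤ p such that both coordinates of v_{i_1} + ... + v_{i_t} are divisible by p, but at least one coordinate is not divisible by p². -/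
/-!
Reducing mod `p`, `v i ≡ c i • w` with `c i ≠ 0`, so every `S` with `∑ i ∈ S, c i = 0` has sum
divisible by `p`. Suppose all such `S` with `#S ≤ p` had sum divisible by `p²`. The subset sums
of a zero-sum-free family grow with each new element, so any `p` elements of `ZMod p` contain a
nonempty zero-sum subfamily, and the restriction `#S ≤ p` can be dropped. By Cauchy–Davenport
the subset sums of `c` over any `p - 1` indices `Q` cover `ZMod p`, so modulo `p²` the sum over
a set disjoint from `Q` depends only on its `c`-sum. Adding a fixed index `i ∉ Q` to sets with
`c`-sums `k • c i`, one step at a time, gives `p • v i ≡ 0 [p²]`, i.e. `v i ≡ 0 [p]`,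
contradicting primitivity.
-/

open Finset
open scoped Pointwise

section SubsetSums

variable {ι G : Type*} [AddCommGroup G] [DecidableEq G]

def subsetSums (ξ : ι → G) (S : Finset ι) : Finset G :=
  S.powerset.image fun T => ∑ i ∈ T, ξ i

variable {ξ : ι → G} {S : Finset ι}

lemma mem_subsetSums {x : G} : x ∈ subsetSums ξ S ↔ ∃ T ⊆ S, ∑ i ∈ T, ξ i = x := by
  simp [subsetSums]

lemma zero_mem_subsetSums : (0 : G) ∈ subsetSums ξ S :=
  mem_subsetSums.2 ⟨∅, empty_subset S, sum_empty⟩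

variable [DecidableEq ι]

lemma subsetSums_subset_insert (a : ι) : subsetSums ξ S ⊆ subsetSums ξ (insert a S) :=
  image_subset_image (powerset_mono.2 (subset_insert a S))

lemma add_mem_subsetSums_insert {a : ι} (ha : a ∉ S) {x : G} (hx : x ∈ subsetSums ξ S) :
    x + ξ a ∈ subsetSums ξ (insert a S) := by
  obtain ⟨T, hTS, rfl⟩ := mem_subsetSums.1 hx
  exact mem_subsetSums.2
    ⟨insert a T, insert_subset_insert a hTS, by rw [sum_insert (fun h => ha (hTS h)), add_comm]⟩

lemma card_lt_card_subsetSums (h : ∀ T ⊆ S, T.Nonempty → ∑ i ∈ T, ξ i ≠ 0) :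
    #S < #(subsetSums ξ S) := by
  induction S using Finset.induction_on with
  | empty => simp [subsetSums]
  | @insert a S ha IH =>
    have IH := IH fun T hT => h T (hT.trans (subset_insert a S))
    obtain ⟨x, hx, hxa⟩ : ∃ x ∈ subsetSums ξ S, x + ξ a ∉ subsetSums ξ S := by
      by_contra! hclosed
      -- translation by `ξ a` then permutes `subsetSums ξ S`, so `0` has the preimage `-ξ a` in it
      have himage : (subsetSums ξ S).image (· + ξ a) = subsetSums ξ S :=
        eq_of_subset_of_card_le (image_subset_iff.2 hclosed)
          (card_image_of_injective _ (add_left_injective _)).ge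
      obtain ⟨y, hy, hy0⟩ := mem_image.1 (himage ▸ zero_mem_subsetSums)
      obtain ⟨T, hTS, rfl⟩ := mem_subsetSums.1 hy
      exact h (insert a T) (insert_subset_insert a hTS) (insert_nonempty a T)
        (by rw [sum_insert (fun h => ha (hTS h)), add_comm, hy0])
    calc #(insert a S) = #S + 1 := card_insert_of_notMem ha
      _ < #(subsetSums ξ S) + 1 := by omega
      _ = #(insert (x + ξ a) (subsetSums ξ S)) := (card_insert_of_notMem hxa).symm
      _ ≤ #(subsetSums ξ (insert a S)) :=
        card_le_card (insert_subset (add_mem_subsetSums_insert ha hx) (subsetSums_subset_insert a))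

lemma exists_nonempty_subset_sum_eq_zero [Fintype G] (ξ : ι → G) (hS : Fintype.card G ≤ #S) :
    ∃ T ⊆ S, T.Nonempty ∧ #T ≤ Fintype.card G ∧ ∑ i ∈ T, ξ i = 0 := by
  obtain ⟨S', hS'S, hS'⟩ := exists_subset_card_eq hS
  by_contra! h
  have := card_lt_card_subsetSums (ξ := ξ) fun T hT hne =>
    h T (hT.trans hS'S) hne (hS' ▸ card_le_card hT)
  exact (hS' ▸ this).not_ge (card_le_univ _)

lemma min_le_card_subsetSums {p : ℕ} [Fact p.Prime] {ξ : ι → ZMod p} (hξ : ∀ i ∈ S, ξ i ≠ 0) :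
    min p (#S + 1) ≤ #(subsetSums ξ S) := by
  induction S using Finset.induction_on with
  | empty => simp [subsetSums]
  | @insert a S ha IH =>
    have IH := IH fun i hi => hξ i (mem_insert_of_mem hi)
    have hsub : subsetSums ξ S + ({0, ξ a} : Finset (ZMod p)) ⊆ subsetSums ξ (insert a S) := by
      intro z hz
      obtain ⟨x, hx, y, hy, rfl⟩ := mem_add.1 hz
      rcases mem_insert.1 hy with rfl | hy
      · rw [add_zero]; exact subsetSums_subset_insert a hx
      · rw [mem_singleton.1 hy]; exact add_mem_subsetSums_insert ha hx
    have hCD := ZMod.cauchy_davenport Fact.out ⟨0, zero_mem_subsetSums (ξ := ξ) (S := S)⟩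
      (insert_nonempty (0 : ZMod p) {ξ a})
    rw [card_pair (hξ a (mem_insert_self a S)).symm] at hCD
    have := card_le_card hsub
    rw [card_insert_of_notMem ha]
    omega

lemma exists_subset_sum_eq {p : ℕ} [Fact p.Prime] {ξ : ι → ZMod p} (hξ : ∀ i ∈ S, ξ i ≠ 0)
    (hS : p - 1 ≤ #S) (x : ZMod p) : ∃ T ⊆ S, ∑ i ∈ T, ξ i = x := by
  have hcard : p ≤ #(subsetSums ξ S) := by
    have := min_le_card_subsetSums hξ
    omega
  have huniv : subsetSums ξ S = univ :=
    eq_univ_of_card _ (le_antisymm (card_le_univ _) (by rwa [ZMod.card]))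
  exact mem_subsetSums.1 (huniv ▸ mem_univ x)

end SubsetSums

section ZeroSums

variable {ι G H : Type*} [DecidableEq ι] [AddCommGroup G] [AddCommGroup H] (ξ : ι → G) (B : ι → H)

lemma sum_eq_zero_of_forall_card_le [Fintype G] [DecidableEq G]
    (h : ∀ T : Finset ι, T.Nonempty → #T ≤ Fintype.card G →
      ∑ i ∈ T, ξ i = 0 → ∑ i ∈ T, B i = 0)
    (S : Finset ι) (hS : ∑ i ∈ S, ξ i = 0) : ∑ i ∈ S, B i = 0 := by
  induction S using Finset.strongInduction with
  | H S IH =>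
  by_cases hcard : Fintype.card G ≤ #S
  · obtain ⟨T, hTS, hT, hTcard, hTsum⟩ := exists_nonempty_subset_sum_eq_zero ξ hcard
    have hrest : ∑ i ∈ S \ T, ξ i = 0 := by rw [← hS, ← sum_sdiff hTS, hTsum, add_zero]
    rw [← sum_sdiff hTS, IH _ (sdiff_ssubset hTS hT) hrest, h T hT hTcard hTsum, add_zero]
  · rcases S.eq_empty_or_nonempty with rfl | hne
    · exact sum_empty
    · exact h S hne (by omega) hS

lemma sum_eq_sum_of_sum_eq (hzero : ∀ S : Finset ι, ∑ i ∈ S, ξ i = 0 → ∑ i ∈ S, B i = 0)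
    {Q K K' : Finset ι} (hQ : ∃ T ⊆ Q, ∑ i ∈ T, ξ i = -∑ i ∈ K, ξ i)
    (hK : Disjoint K Q) (hK' : Disjoint K' Q) (h : ∑ i ∈ K, ξ i = ∑ i ∈ K', ξ i) :
    ∑ i ∈ K, B i = ∑ i ∈ K', B i := by
  obtain ⟨T, hTQ, hT⟩ := hQ
  have hKT := hK.mono_right hTQ
  have hK'T := hK'.mono_right hTQ
  have h₁ := hzero (K ∪ T) (by rw [sum_union hKT, hT, add_neg_cancel])
  have h₂ := hzero (K' ∪ T) (by rw [sum_union hK'T, hT, h, add_neg_cancel])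
  rw [sum_union hKT] at h₁
  rw [sum_union hK'T] at h₂
  exact add_right_cancel (h₁.trans h₂.symm)

end ZeroSums

theorem nsmul_eq_zero_of_forall_sum_eq_zero {p : ℕ} [Fact p.Prime] {ι H : Type*} [Fintype ι]
    [DecidableEq ι] [AddCommGroup H] (ξ : ι → ZMod p) (B : ι → H) (hξ : ∀ i, ξ i ≠ 0)
    (hι : 2 * p - 1 ≤ Fintype.card ι)
    (h : ∀ T : Finset ι, T.Nonempty → #T ≤ p → ∑ i ∈ T, ξ i = 0 → ∑ i ∈ T, B i = 0) (i : ι) :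
    p • B i = 0 := by
  have hzero := sum_eq_zero_of_forall_card_le ξ B (by simpa only [ZMod.card] using h)
  obtain ⟨P, hP, hPcard⟩ := exists_subset_card_eq (s := univ.erase i) (n := p - 1)
    (by rw [card_erase_of_mem (mem_univ i), card_univ]; omega)
  obtain ⟨Q, hQ, hQcard⟩ := exists_subset_card_eq (s := univ.erase i \ P) (n := p - 1)
    (by rw [card_sdiff_of_subset hP, card_erase_of_mem (mem_univ i), card_univ]; omega)
  have hiQ : i ∉ Q := fun hi => notMem_erase i univ (sdiff_subset (hQ hi))
  have hPQ : Disjoint P Q := disjoint_sdiff.mono_right hQ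
  have hmul : ∀ k : ℕ, ∀ K, Disjoint K Q → ∑ j ∈ K, ξ j = k • ξ i → ∑ j ∈ K, B j = k • B i := by
    intro k
    induction k with
    | zero => intro K _ hK; rw [zero_nsmul] at hK ⊢; exact hzero K hK
    | succ k IH =>
      intro K hKQ hK
      obtain ⟨K₀, hK₀P, hK₀⟩ := exists_subset_sum_eq (fun j _ => hξ j) hPcard.ge (k • ξ i)
      have hiK₀ : i ∉ K₀ := fun hi => notMem_erase i univ (hP (hK₀P hi))
      have hK₀Q : Disjoint K₀ Q := hPQ.mono_left hK₀P
      rw [sum_eq_sum_of_sum_eq ξ B hzero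
          (exists_subset_sum_eq (fun j _ => hξ j) hQcard.ge _) hKQ
          (disjoint_insert_left.2 ⟨hiQ, hK₀Q⟩)
          (by rw [hK, sum_insert hiK₀, hK₀, succ_nsmul, add_comm]),
        sum_insert hiK₀, IH K₀ hK₀Q hK₀, succ_nsmul, add_comm]
  simpa using (hmul p ∅ (disjoint_empty_left Q) (by simp)).symm

namespace PadicInt

variable {p : ℕ} [Fact p.Prime]

lemma toZMod_eq_zero_iff {x : ℤ_[p]} : toZMod x = 0 ↔ (p : ℤ_[p]) ∣ x := by
  rw [← RingHom.mem_ker, ker_toZMod, maximalIdeal_eq_span_p, Ideal.mem_span_singleton]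

lemma toZModPow_eq_zero_iff {n : ℕ} {x : ℤ_[p]} : toZModPow n x = 0 ↔ (p : ℤ_[p]) ^ n ∣ x := by
  rw [← RingHom.mem_ker, ker_toZModPow, Ideal.mem_span_singleton]

lemma nsmul_toZModPow_succ_eq_zero_iff {n : ℕ} {x : ℤ_[p]} :
    p • toZModPow (n + 1) x = 0 ↔ (p : ℤ_[p]) ^ n ∣ x := by
  rw [nsmul_eq_mul, ← map_natCast (toZModPow (n + 1)), ← map_mul, toZModPow_eq_zero_iff, pow_succ',
    mul_dvd_mul_iff_left (Nat.cast_ne_zero.2 (Fact.out : p.Prime).ne_zero)]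

end PadicInt

theorem stmt_8 (p : ℕ) [Fact p.Prime] (v : Fin (3 * p - 2) → ℤ_[p] × ℤ_[p])
    (hprim : ∀ i, ¬ ((p : ℤ_[p]) ∣ (v i).1 ∧ (p : ℤ_[p]) ∣ (v i).2))
    (hclass : ∃ w : ZMod p × ZMod p, w ≠ 0 ∧
      ∀ i, ∃ c : ZMod p, c ≠ 0 ∧
        (PadicInt.toZMod (v i).1, PadicInt.toZMod (v i).2) = c • w) :
    ∃ S : Finset (Fin (3 * p - 2)), S.Nonempty ∧ S.card ≤ p ∧
      (p : ℤ_[p]) ∣ (∑ i ∈ S, (v i).1) ∧ (p : ℤ_[p]) ∣ (∑ i ∈ S, (v i).2) ∧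
      ¬ (((p : ℤ_[p]) ^ 2 ∣ (∑ i ∈ S, (v i).1)) ∧ ((p : ℤ_[p]) ^ 2 ∣ (∑ i ∈ S, (v i).2))) := by
  obtain ⟨w, -, hc⟩ := hclass
  choose c hc0 hcw using hc
  have hp := (Fact.out : p.Prime).two_le
  have hred : ∀ S : Finset (Fin (3 * p - 2)), ∑ i ∈ S, c i = 0 →
      (p : ℤ_[p]) ∣ ∑ i ∈ S, (v i).1 ∧ (p : ℤ_[p]) ∣ ∑ i ∈ S, (v i).2 := by
    intro S hS
    simp only [← PadicInt.toZMod_eq_zero_iff, map_sum]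
    simp only [Prod.ext_iff, Prod.smul_fst, Prod.smul_snd, smul_eq_mul] at hcw
    simp only [hcw, ← sum_mul, hS, zero_mul, and_self]
  by_contra! hS
  let B i := (PadicInt.toZModPow 2 (v i).1, PadicInt.toZModPow 2 (v i).2)
  have hB := nsmul_eq_zero_of_forall_sum_eq_zero c B hc0 (by rw [Fintype.card_fin]; omega)
    (fun T hT hTcard hTsum => by
      obtain ⟨h₁, h₂⟩ := hS T hT hTcard (hred T hTsum).1 (hred T hTsum).2
      simp only [B, Prod.ext_iff, Prod.fst_sum, Prod.snd_sum, Prod.fst_zero, Prod.snd_zero,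
        ← map_sum, PadicInt.toZModPow_eq_zero_iff]
      exact ⟨h₁, h₂⟩) ⟨0, by omega⟩
  simp only [B, Prod.ext_iff, Prod.smul_fst, Prod.smul_snd] at hB
  exact hprim _ ⟨by simpa using PadicInt.nsmul_toZModPow_succ_eq_zero_iff.1 hB.1,
    by simpa using PadicInt.nsmul_toZModPow_succ_eq_zero_iff.1 hB.2⟩
end

section
/- Suppose p^τ variables are distributed over levels 1, 2, ..., τ with t_l variables at level l and t_1 + ... + t_τ = p^τ. A contraction step at a level l < τ replaces t variables at level l by ⌊t/p⌋ variables at strictly higher levels, and such a step can be performed at least once per level. Then there is a sequence of contraction steps, one per level 1, ..., τ-1 in order, resulting in at least p variables at level τ. -/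
lemma div_step_aux (p x S : ℕ) (hp : 0 < p) (hx : x ≤ S) :
    S / p ≤ (S - x) + x / p := by
  obtain ⟨d, rfl⟩ : ∃ d, S = x + d := ⟨S - x, by omega⟩
  rcases Nat.eq_zero_or_pos d with rfl | hd
  · simp
  have hx' : x = p * (x / p) + x % p := (Nat.div_add_mod x p).symm
  have hr : x % p < p := Nat.mod_lt _ hp
  have h1 : (x + d) / p = x / p + (x % p + d) / p := by
    conv_lhs => rw [hx']
    rw [Nat.add_assoc, Nat.mul_add_div hp]
  have h2 : (x % p + d) / p ≤ d := by
    rw [Nat.div_le_iff_le_mul_add_pred hp]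
    have : d ≤ p * d := Nat.le_mul_of_pos_left d hp
    omega
  omega

/-- The contraction process for primary variables: `s l j` is the number of
variables at level `j` (levels indexed `0, …, τ-1`, standing for `1, …, τ`)
after the contractions at the first `l` levels have been performed.  At step
`l` the `s l l` variables at level `l` are contracted into `⌊s l l / p⌋`
variables distributed (arbitrarily) among the higher levels, the variables
already at higher levels being kept. -/
theorem stmt_12 (p τ : ℕ) (hp : p.Prime) (hτ : 1 ≤ τ)
    (s : ℕ → ℕ → ℕ)
    (hsum : ∑ j ∈ Finset.range τ, s 0 j = p ^ τ)
    (hstep : ∀ l, l < τ - 1 →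
      (∀ j, l < j → j < τ → s l j ≤ s (l + 1) j) ∧
      (∑ j ∈ Finset.Ico (l + 1) τ, s (l + 1) j
        = ∑ j ∈ Finset.Ico (l + 1) τ, s l j + s l l / p)) :
    p ≤ s (τ - 1) (τ - 1) := by
  have hp2 : 2 ≤ p := hp.two_le
  have key : ∀ l, l ≤ τ - 1 → p ^ (τ - l) ≤ ∑ j ∈ Finset.Ico l τ, s l j := by
    intro l
    induction l with
    | zero =>
      intro _
      rw [Nat.sub_zero, ← Finset.range_eq_Ico, hsum]
    | succ l ih =>
      intro hl
      have hl' : l < τ - 1 := by omega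
      have IH := ih (by omega)
      have hrec := (hstep l hl').2
      have hsplit : ∑ j ∈ Finset.Ico l τ, s l j
          = s l l + ∑ j ∈ Finset.Ico (l + 1) τ, s l j :=
        Finset.sum_eq_sum_Ico_succ_bot (by omega) _
      set x := s l l with hx
      set T := ∑ j ∈ Finset.Ico (l + 1) τ, s l j with hT
      have hxS : x ≤ x + T := Nat.le_add_right _ _
      have h1 : (x + T) / p ≤ T + x / p := by
        have := div_step_aux p x (x + T) (by omega) hxS
        omega
      have hpow : p ^ (τ - l) = p * p ^ (τ - (l + 1)) := by
        have : τ - l = (τ - (l + 1)) + 1 := by omega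
        rw [this, pow_succ, mul_comm]
      have h2 : p ^ (τ - (l + 1)) ≤ (x + T) / p := by
        apply Nat.le_div_iff_mul_le (by omega) |>.2
        calc p ^ (τ - (l + 1)) * p = p ^ (τ - l) := by rw [hpow]; ring
          _ ≤ x + T := by rw [hsplit] at IH; exact IH
      rw [hrec]
      omega
  have := key (τ - 1) le_rfl
  have hIco : Finset.Ico (τ - 1) τ = {τ - 1} := by
    have : τ = (τ - 1) + 1 := by omega
    rw [this]; simp
  rw [hIco] at this
  simpa using le_trans (by simpa using Nat.le_self_pow (by omega) p) this
end
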